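/- The lattice A6 ⊕ A1 ⊕ A1 ⊕ A1 cannot be embedded in the lattice H ⊕ E8; that is, there is no 10 × 9 integer matrix M such that Mᵀ · G(H ⊕ E8) · M equals the Gram matrix of A6 ⊕ 3A1. -/
import Mathlib

open Matrix

/-- Gram matrix of the ambient lattice (10 × 10). -/
def ambientGram : Matrix (Fin 10) (Fin 10) ℤ :=
  !![0, 1, 0, 0, 0, 0, 0, 0, 0, 0;
      1, 0, 0, 0, 0, 0, 0, 0, 0, 0;
      0, 0, -2, 1, 0, 0, 0, 0, 0, 0;
      0, 0, 1, -2, 1, 0, 0, 0, 0, 0;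
      0, 0, 0, 1, -2, 1, 0, 0, 0, 1;
      0, 0, 0, 0, 1, -2, 1, 0, 0, 0;
      0, 0, 0, 0, 0, 1, -2, 1, 0, 0;
      0, 0, 0, 0, 0, 0, 1, -2, 1, 0;
      0, 0, 0, 0, 0, 0, 0, 1, -2, 0;
      0, 0, 0, 0, 1, 0, 0, 0, 0, -2]

/-- Gram matrix of the root lattice to be embedded (9 × 9). -/
def rootGram : Matrix (Fin 9) (Fin 9) ℤ :=
  !![-2, 1, 0, 0, 0, 0, 0, 0, 0;
      1, -2, 1, 0, 0, 0, 0, 0, 0;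
      0, 1, -2, 1, 0, 0, 0, 0, 0;
      0, 0, 1, -2, 1, 0, 0, 0, 0;
      0, 0, 0, 1, -2, 1, 0, 0, 0;
      0, 0, 0, 0, 1, -2, 0, 0, 0;
      0, 0, 0, 0, 0, 0, -2, 0, 0;
      0, 0, 0, 0, 0, 0, 0, -2, 0;
      0, 0, 0, 0, 0, 0, 0, 0, -2]

/-- The reduction of `ambientGram` modulo 2. -/
private def G2 : Matrix (Fin 10) (Fin 10) (ZMod 2) :=
  !![0, 1, 0, 0, 0, 0, 0, 0, 0, 0;
      1, 0, 0, 0, 0, 0, 0, 0, 0, 0;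
      0, 0, 0, 1, 0, 0, 0, 0, 0, 0;
      0, 0, 1, 0, 1, 0, 0, 0, 0, 0;
      0, 0, 0, 1, 0, 1, 0, 0, 0, 1;
      0, 0, 0, 0, 1, 0, 1, 0, 0, 0;
      0, 0, 0, 0, 0, 1, 0, 1, 0, 0;
      0, 0, 0, 0, 0, 0, 1, 0, 1, 0;
      0, 0, 0, 0, 0, 0, 0, 1, 0, 0;
      0, 0, 0, 0, 1, 0, 0, 0, 0, 0]

/-- The reduction of `rootGram` modulo 2. -/
private def R2 : Matrix (Fin 9) (Fin 9) (ZMod 2) :=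
  !![0, 1, 0, 0, 0, 0, 0, 0, 0;
      1, 0, 1, 0, 0, 0, 0, 0, 0;
      0, 1, 0, 1, 0, 0, 0, 0, 0;
      0, 0, 1, 0, 1, 0, 0, 0, 0;
      0, 0, 0, 1, 0, 1, 0, 0, 0;
      0, 0, 0, 0, 1, 0, 0, 0, 0;
      0, 0, 0, 0, 0, 0, 0, 0, 0;
      0, 0, 0, 0, 0, 0, 0, 0, 0;
      0, 0, 0, 0, 0, 0, 0, 0, 0]

/-- An explicit inverse of `G2` over `ZMod 2`. -/
private def Ginv2 : Matrix (Fin 10) (Fin 10) (ZMod 2) :=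
  !![0, 1, 0, 0, 0, 0, 0, 0, 0, 0;
     1, 0, 0, 0, 0, 0, 0, 0, 0, 0;
     0, 0, 0, 1, 0, 0, 0, 0, 0, 1;
     0, 0, 1, 0, 0, 0, 0, 0, 0, 0;
     0, 0, 0, 0, 0, 0, 0, 0, 0, 1;
     0, 0, 0, 0, 0, 0, 1, 0, 1, 0;
     0, 0, 0, 0, 0, 1, 0, 0, 0, 1;
     0, 0, 0, 0, 0, 0, 0, 0, 1, 0;
     0, 0, 0, 0, 0, 1, 0, 1, 0, 1;
     0, 0, 1, 0, 1, 0, 1, 0, 1, 0]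

private lemma succ2_0 : (Fin.succ (0 : Fin 1) : Fin 2) = 1 := rfl
private lemma succ3_0 : (Fin.succ (0 : Fin 2) : Fin 3) = 1 := rfl
private lemma succ3_1 : (Fin.succ (1 : Fin 2) : Fin 3) = 2 := rfl
private lemma succ4_0 : (Fin.succ (0 : Fin 3) : Fin 4) = 1 := rfl
private lemma succ4_1 : (Fin.succ (1 : Fin 3) : Fin 4) = 2 := rfl
private lemma succ4_2 : (Fin.succ (2 : Fin 3) : Fin 4) = 3 := rfl
private lemma succ5_0 : (Fin.succ (0 : Fin 4) : Fin 5) = 1 := rfl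
private lemma succ5_1 : (Fin.succ (1 : Fin 4) : Fin 5) = 2 := rfl
private lemma succ5_2 : (Fin.succ (2 : Fin 4) : Fin 5) = 3 := rfl
private lemma succ5_3 : (Fin.succ (3 : Fin 4) : Fin 5) = 4 := rfl
private lemma succ6_0 : (Fin.succ (0 : Fin 5) : Fin 6) = 1 := rfl
private lemma succ6_1 : (Fin.succ (1 : Fin 5) : Fin 6) = 2 := rfl
private lemma succ6_2 : (Fin.succ (2 : Fin 5) : Fin 6) = 3 := rfl
private lemma succ6_3 : (Fin.succ (3 : Fin 5) : Fin 6) = 4 := rfl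
private lemma succ6_4 : (Fin.succ (4 : Fin 5) : Fin 6) = 5 := rfl
private lemma succ7_0 : (Fin.succ (0 : Fin 6) : Fin 7) = 1 := rfl
private lemma succ7_1 : (Fin.succ (1 : Fin 6) : Fin 7) = 2 := rfl
private lemma succ7_2 : (Fin.succ (2 : Fin 6) : Fin 7) = 3 := rfl
private lemma succ7_3 : (Fin.succ (3 : Fin 6) : Fin 7) = 4 := rfl
private lemma succ7_4 : (Fin.succ (4 : Fin 6) : Fin 7) = 5 := rfl
private lemma succ7_5 : (Fin.succ (5 : Fin 6) : Fin 7) = 6 := rfl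
private lemma succ8_0 : (Fin.succ (0 : Fin 7) : Fin 8) = 1 := rfl
private lemma succ8_1 : (Fin.succ (1 : Fin 7) : Fin 8) = 2 := rfl
private lemma succ8_2 : (Fin.succ (2 : Fin 7) : Fin 8) = 3 := rfl
private lemma succ8_3 : (Fin.succ (3 : Fin 7) : Fin 8) = 4 := rfl
private lemma succ8_4 : (Fin.succ (4 : Fin 7) : Fin 8) = 5 := rfl
private lemma succ8_5 : (Fin.succ (5 : Fin 7) : Fin 8) = 6 := rfl
private lemma succ8_6 : (Fin.succ (6 : Fin 7) : Fin 8) = 7 := rfl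
private lemma succ9_0 : (Fin.succ (0 : Fin 8) : Fin 9) = 1 := rfl
private lemma succ9_1 : (Fin.succ (1 : Fin 8) : Fin 9) = 2 := rfl
private lemma succ9_2 : (Fin.succ (2 : Fin 8) : Fin 9) = 3 := rfl
private lemma succ9_3 : (Fin.succ (3 : Fin 8) : Fin 9) = 4 := rfl
private lemma succ9_4 : (Fin.succ (4 : Fin 8) : Fin 9) = 5 := rfl
private lemma succ9_5 : (Fin.succ (5 : Fin 8) : Fin 9) = 6 := rfl
private lemma succ9_6 : (Fin.succ (6 : Fin 8) : Fin 9) = 7 := rfl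
private lemma succ9_7 : (Fin.succ (7 : Fin 8) : Fin 9) = 8 := rfl
private lemma succ10_0 : (Fin.succ (0 : Fin 9) : Fin 10) = 1 := rfl
private lemma succ10_1 : (Fin.succ (1 : Fin 9) : Fin 10) = 2 := rfl
private lemma succ10_2 : (Fin.succ (2 : Fin 9) : Fin 10) = 3 := rfl
private lemma succ10_3 : (Fin.succ (3 : Fin 9) : Fin 10) = 4 := rfl
private lemma succ10_4 : (Fin.succ (4 : Fin 9) : Fin 10) = 5 := rfl
private lemma succ10_5 : (Fin.succ (5 : Fin 9) : Fin 10) = 6 := rfl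
private lemma succ10_6 : (Fin.succ (6 : Fin 9) : Fin 10) = 7 := rfl
private lemma succ10_7 : (Fin.succ (7 : Fin 9) : Fin 10) = 8 := rfl
private lemma succ10_8 : (Fin.succ (8 : Fin 9) : Fin 10) = 9 := rfl

private lemma amb_even (w : Fin 10 → ℤ) :
    w ⬝ᵥ ambientGram.mulVec w =
      2 * (w 0 * w 1 + w 2 * w 3 + w 3 * w 4 + w 4 * w 5 + w 5 * w 6 + w 6 * w 7 + w 7 * w 8
        + w 4 * w 9 - w 2 * w 2 - w 3 * w 3 - w 4 * w 4 - w 5 * w 5 - w 6 * w 6 - w 7 * w 7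
        - w 8 * w 8 - w 9 * w 9) := by
  simp [ambientGram, mulVec, dotProduct, Fin.sum_univ_succ, succ2_0, succ3_0, succ3_1, succ4_0, succ4_1, succ4_2, succ5_0, succ5_1, succ5_2, succ5_3, succ6_0, succ6_1, succ6_2, succ6_3, succ6_4, succ7_0, succ7_1, succ7_2, succ7_3, succ7_4, succ7_5, succ8_0, succ8_1, succ8_2, succ8_3, succ8_4, succ8_5, succ8_6, succ9_0, succ9_1, succ9_2, succ9_3, succ9_4, succ9_5, succ9_6, succ9_7, succ10_0, succ10_1, succ10_2, succ10_3, succ10_4, succ10_5, succ10_6, succ10_7, succ10_8]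
  ring

private lemma root_expand (y : Fin 9 → ℤ) (h0 : y 0 = 0) (h1 : y 1 = 0) (h2 : y 2 = 0)
    (h3 : y 3 = 0) (h4 : y 4 = 0) (h5 : y 5 = 0) :
    y ⬝ᵥ rootGram.mulVec y = -2 * (y 6 * y 6 + y 7 * y 7 + y 8 * y 8) := by
  simp [rootGram, mulVec, dotProduct, Fin.sum_univ_succ, succ2_0, succ3_0, succ3_1, succ4_0, succ4_1, succ4_2, succ5_0, succ5_1, succ5_2, succ5_3, succ6_0, succ6_1, succ6_2, succ6_3, succ6_4, succ7_0, succ7_1, succ7_2, succ7_3, succ7_4, succ7_5, succ8_0, succ8_1, succ8_2, succ8_3, succ8_4, succ8_5, succ8_6, succ9_0, succ9_1, succ9_2, succ9_3, succ9_4, succ9_5, succ9_6, succ9_7, succ10_0, succ10_1, succ10_2, succ10_3, succ10_4, succ10_5, succ10_6, succ10_7, succ10_8, h0, h1, h2, h3, h4, h5]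
  ring

private lemma key_transport (M : Matrix (Fin 10) (Fin 9) ℤ)
    (h : Mᵀ * ambientGram * M = rootGram) (y : Fin 9 → ℤ) :
    y ⬝ᵥ rootGram.mulVec y = (M.mulVec y) ⬝ᵥ ambientGram.mulVec (M.mulVec y) := by
  rw [← h, ← Matrix.mulVec_mulVec, ← Matrix.mulVec_mulVec, Matrix.dotProduct_mulVec,
    Matrix.vecMul_transpose]

/-- Existence of a nonzero mod-2 kernel vector. -/
private lemma exists_ker (N : Matrix (Fin 10) (Fin 9) (ZMod 2))
    (hN : Nᵀ * G2 * N = R2) :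
    ∃ x : Fin 9 → ZMod 2, x ≠ 0 ∧ N.mulVec x = 0 := by
  have hdet : IsUnit G2.det :=
    Matrix.isUnit_det_of_right_inverse (B := Ginv2) (by decide)
  have hcol : ∀ j : Fin 3, R2.mulVec (Pi.single (⟨j.1 + 6, by omega⟩ : Fin 9) 1) = 0 := by
    decide
  by_contra hc
  push_neg at hc
  have hinj : LinearMap.ker N.mulVecLin = ⊥ := by
    rw [LinearMap.ker_eq_bot']
    intro x hx
    by_contra hne
    exact hc x hne (by simpa using hx)
  have h1 := LinearMap.finrank_range_add_finrank_ker N.mulVecLin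
  rw [hinj, finrank_bot, add_zero] at h1
  have hrankN : N.rank = 9 := by
    rw [Matrix.rank, h1]
    simp [Module.finrank_pi]
  have hrkg : (Nᵀ * G2).rank = 9 := by
    rw [Matrix.rank_mul_eq_left_of_isUnit_det _ _ hdet, Matrix.rank_transpose, hrankN]
  set g := (Nᵀ * G2).mulVecLin with hg
  have hkerg : Module.finrank (ZMod 2) (LinearMap.ker g) = 1 := by
    have h2 := LinearMap.finrank_range_add_finrank_ker g
    rw [Matrix.rank] at hrkg
    rw [← hg] at hrkg
    rw [hrkg] at h2
    simp [Module.finrank_pi] at h2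
    omega
  set e : Fin 3 → (Fin 9 → ZMod 2) := fun i => Pi.single (⟨i.1 + 6, by omega⟩ : Fin 9) 1 with he
  have hei : LinearIndependent (ZMod 2) e := by
    have hb := (Pi.basisFun (ZMod 2) (Fin 9)).linearIndependent
    have hcomp := hb.comp (fun i : Fin 3 => (⟨i.1 + 6, by omega⟩ : Fin 9))
      (by intro a b hab; apply Fin.ext; have := Fin.mk.injEq .. ▸ hab; omega)
    simpa [he, Function.comp_def, Pi.basisFun_apply] using hcomp
  have hvind : LinearIndependent (ZMod 2) (fun i => N.mulVecLin (e i)) :=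
    hei.map' _ hinj
  have hvker : ∀ i, N.mulVecLin (e i) ∈ LinearMap.ker g := by
    intro i
    simp only [LinearMap.mem_ker, hg, mulVecLin_apply, mulVec_mulVec, hN]
    exact hcol i
  have hspan : Submodule.span (ZMod 2) (Set.range fun i => N.mulVecLin (e i)) ≤
      LinearMap.ker g :=
    Submodule.span_le.mpr (Set.range_subset_iff.mpr hvker)
  have h3 : Module.finrank (ZMod 2)
      (Submodule.span (ZMod 2) (Set.range fun i => N.mulVecLin (e i))) = 3 := by
    rw [finrank_span_eq_card hvind]
    simp
  have := Submodule.finrank_mono hspan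
  omega

/-- Structure of mod-2 kernel vectors of `R2`. -/
private lemma ker_R2 : ∀ z : Fin 9 → ZMod 2, R2.mulVec z = 0 → z ≠ 0 →
    (z 0 = 0 ∧ z 1 = 0 ∧ z 2 = 0 ∧ z 3 = 0 ∧ z 4 = 0 ∧ z 5 = 0) ∧
      ¬(z 6 = 0 ∧ z 7 = 0 ∧ z 8 = 0) := by
  set_option maxRecDepth 100000 in decide

theorem stmt_1 :
    ¬ ∃ M : Matrix (Fin 10) (Fin 9) ℤ,
      Mᵀ * ambientGram * M = rootGram := by
  rintro ⟨M, h⟩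
  -- reduce modulo 2
  set N : Matrix (Fin 10) (Fin 9) (ZMod 2) :=
    M.map (Int.castRingHom (ZMod 2)) with hNdef
  have hG2 : ambientGram.map (Int.castRingHom (ZMod 2)) = G2 := by decide
  have hR2 : rootGram.map (Int.castRingHom (ZMod 2)) = R2 := by decide
  have hN : Nᵀ * G2 * N = R2 := by
    have hmapped := congrArg
      (fun P : Matrix (Fin 9) (Fin 9) ℤ => P.map (Int.castRingHom (ZMod 2))) h
    simp only [Matrix.map_mul (f := Int.castRingHom (ZMod 2)),
      Matrix.transpose_map, hG2, hR2] at hmapped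
    exact hmapped
  obtain ⟨x, hx0, hxker⟩ := exists_ker N hN
  have hxR : R2.mulVec x = 0 := by
    rw [← hN, ← Matrix.mulVec_mulVec, hxker, Matrix.mulVec_zero]
  obtain ⟨⟨hz0, hz1, hz2, hz3, hz4, hz5⟩, hz678⟩ := ker_R2 x hxR hx0
  -- lift to an integer vector
  set y : Fin 9 → ℤ := fun i => ((x i).val : ℤ) with hy
  have hyx : ∀ i, ((y i : ℤ) : ZMod 2) = x i := by
    intro i
    show (((x i).val : ℤ) : ZMod 2) = x i
    push_cast
    simp [ZMod.natCast_val]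
  have hyb : ∀ i, 0 ≤ y i ∧ y i ≤ 1 := by
    intro i
    have hv := ZMod.val_lt (x i)
    simp only [hy]
    omega
  have hyz : ∀ i, x i = 0 → y i = 0 := by
    intro i hi
    simp [hy, hi]
  have hy0 := hyz 0 hz0
  have hy1 := hyz 1 hz1
  have hy2 := hyz 2 hz2
  have hy3 := hyz 3 hz3
  have hy4 := hyz 4 hz4
  have hy5 := hyz 5 hz5
  -- M *ᵥ y is even
  have hMy2 : ∀ j, (2 : ℤ) ∣ M.mulVec y j := by
    intro j
    have hc : ((M.mulVec y j : ℤ) : ZMod 2) = N.mulVec x j := by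
      push_cast [Matrix.mulVec, dotProduct]
      refine Finset.sum_congr rfl fun i _ => ?_
      rw [hyx i]
      simp [hNdef, Matrix.map_apply]
    rw [hxker] at hc
    exact (ZMod.intCast_zmod_eq_zero_iff_dvd _ 2).mp (by simpa using hc)
  choose w hw using hMy2
  -- the ambient value is divisible by 8
  obtain ⟨s, hs⟩ : ∃ s : ℤ, (M.mulVec y) ⬝ᵥ ambientGram.mulVec (M.mulVec y) = 8 * s := by
    have hMyw : M.mulVec y = fun j => 2 * w j := funext hw
    refine ⟨w 0 * w 1 + w 2 * w 3 + w 3 * w 4 + w 4 * w 5 + w 5 * w 6 + w 6 * w 7 + w 7 * w 8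
      + w 4 * w 9 - w 2 * w 2 - w 3 * w 3 - w 4 * w 4 - w 5 * w 5 - w 6 * w 6 - w 7 * w 7
      - w 8 * w 8 - w 9 * w 9, ?_⟩
    rw [hMyw]
    have hsm : (fun j => 2 * w j) = (2 : ℤ) • w := by
      funext j
      simp [smul_eq_mul]
    rw [hsm, smul_dotProduct, Matrix.mulVec_smul, dotProduct_smul, amb_even w]
    simp only [smul_eq_mul]
    ring
  have main := key_transport M h y
  rw [root_expand y hy0 hy1 hy2 hy3 hy4 hy5, hs] at main
  -- final arithmetic contradiction
  have h678 : y 6 = 1 ∨ y 7 = 1 ∨ y 8 = 1 := by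
    by_contra hcon
    push_neg at hcon
    obtain ⟨c6, c7, c8⟩ := hcon
    have b6 := hyb 6
    have b7 := hyb 7
    have b8 := hyb 8
    simp only [hy] at c6 c7 c8 b6 b7 b8
    refine hz678 ⟨?_, ?_, ?_⟩ <;> rw [← ZMod.val_eq_zero] <;> omega
  have e6 : y 6 = 0 ∨ y 6 = 1 := by have := hyb 6; omega
  have e7 : y 7 = 0 ∨ y 7 = 1 := by have := hyb 7; omega
  have e8 : y 8 = 0 ∨ y 8 = 1 := by have := hyb 8; omega
  rcases h678 with hh | hh | hh <;>
    rcases e6 with e6 | e6 <;> rcases e7 with e7 | e7 <;> rcases e8 with e8 | e8 <;>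
    rw [e6, e7, e8] at main <;> omega
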